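/- arXiv:2204.13946 — 4 statements merged into one kernel-verified Lean document; each statement's English description precedes it below -/
import Mathlib

section
/- Let F(α) be the free group on a set α and let a ∈ α. Then for every x ∈ F(α), x commutes with the generator a if and only if x is an integer power of a; that is, the centralizer of a in F(α) equals the cyclic subgroup ⟨a⟩ = {a^n : n ∈ ℤ}. -/
/-!
Induct on the length of the reduced word of `x`. If it is nonempty and does not start with
`a^{±1}`, then `a * x` is reduced as written, of length `|x| + 1`, while the reduced word of
`x * a` is a sublist of `x ++ [a]`; commuting forces the two to coincide, so the word of `x`
would start with `a` after all. Hence the first letter is `a^{±1}`, and stripping it leaves a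
shorter element that still commutes with `a`.
-/

namespace FreeGroup

variable {α : Type*}

theorem mk_singleton_mem_zpowers_of (a : α) (b : Bool) :
    mk [(a, b)] ∈ Subgroup.zpowers (of a) := by
  cases b
  · exact inv_mem (Subgroup.mem_zpowers (of a))
  · exact Subgroup.mem_zpowers (of a)

theorem zpowers_of_le_centralizer (a : α) :
    Subgroup.zpowers (of a) ≤ Subgroup.centralizer {of a} :=
  Subgroup.zpowers_le.mpr (Subgroup.mem_centralizer_singleton_iff.mpr rfl)

section DecidableEq

variable [DecidableEq α]

theorem eq_mk_singleton_mul_of_toWord_eq_cons {x : FreeGroup α} {p : α × Bool}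
    {t : List (α × Bool)} (h : x.toWord = p :: t) :
    x = mk [p] * mk t ∧ (mk t).toWord = t := by
  refine ⟨by rw [mul_mk, List.singleton_append, ← h, mk_toWord], ?_⟩
  rw [toWord_mk]
  have hpt : IsReduced (p :: t) := h ▸ isReduced_toWord
  exact (hpt.infix (List.suffix_cons p t).isInfix).reduce_eq

theorem toWord_of_mul {a : α} {x : FreeGroup α}
    (h : ∀ p ∈ x.toWord.head?, p.1 = a → p.2 = true) :
    (of a * x).toWord = (a, true) :: x.toWord := by
  rw [toWord_mul, toWord_of, List.singleton_append]
  refine IsReduced.reduce_eq ?_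
  rcases hx : x.toWord with _ | ⟨p, t⟩
  · exact IsReduced.singleton
  · rw [hx] at h
    exact isReduced_cons_cons.mpr ⟨fun hp => (h p rfl hp.symm).symm, hx ▸ isReduced_toWord⟩

theorem exists_toWord_eq_cons_of_commute {a : α} {x : FreeGroup α}
    (hx : x * of a = of a * x) (h1 : x ≠ 1) :
    ∃ b t, x.toWord = (a, b) :: t := by
  obtain ⟨p, t, hw⟩ := List.exists_cons_of_ne_nil (mt toWord_eq_nil_iff.mp h1)
  by_cases hp : p.1 = a
  · exact ⟨p.2, t, hp ▸ hw⟩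
  exfalso
  have hleft : (of a * x).toWord = (a, true) :: x.toWord :=
    toWord_of_mul (by simp [hw, hp])
  have hright : (a, true) :: x.toWord = x.toWord ++ [(a, true)] := by
    refine List.Sublist.eq_of_length ?_ (by simp)
    rw [← hleft, ← hx, ← toWord_of]
    exact toWord_mul_sublist x (of a)
  rw [hw] at hright
  exact hp (congrArg Prod.fst (List.cons.inj hright).1).symm

end DecidableEq

theorem centralizer_of (a : α) :
    Subgroup.centralizer {of a} = Subgroup.zpowers (of a) := by
  classical
  refine le_antisymm (fun x hx => ?_) (zpowers_of_le_centralizer a)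
  induction hn : x.norm using Nat.strong_induction_on generalizing x with
  | _ n ih =>
  rcases eq_or_ne x 1 with rfl | h1
  · exact one_mem _
  obtain ⟨b, t, hw⟩ :=
    exists_toWord_eq_cons_of_commute (Subgroup.mem_centralizer_singleton_iff.mp hx) h1
  obtain ⟨hx_eq, ht⟩ := eq_mk_singleton_mul_of_toWord_eq_cons hw
  have hb := mk_singleton_mem_zpowers_of a b
  have ht_mem : mk t ∈ Subgroup.centralizer {of a} := by
    rw [eq_inv_mul_of_mul_eq hx_eq.symm]
    exact mul_mem (inv_mem (zpowers_of_le_centralizer a hb)) hx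
  have ht_norm : (mk t).norm < n := by
    rw [← hn, norm, norm, ht, hw, List.length_cons]
    exact Nat.lt_succ_self _
  rw [hx_eq]
  exact mul_mem hb (ih _ ht_norm _ ht_mem rfl)

end FreeGroup

/-- In a free group, the centralizer of a generator `a` is the cyclic subgroup `⟨a⟩`:
an element commutes with `a` iff it is an integer power of `a`. -/
theorem stmt_4 (α : Type*) (a : α) (x : FreeGroup α) :
    x * FreeGroup.of a = FreeGroup.of a * x ↔
      x ∈ Subgroup.zpowers (FreeGroup.of a) := by
  rw [← FreeGroup.centralizer_of, Subgroup.mem_centralizer_singleton_iff]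
end

section
/- Let F(α) be the free group on a set α, let a, b ∈ α be distinct, and let t be a nonzero integer. Then for every x ∈ F(α), x commutes with a·b^t if and only if x is an integer power of a·b^t; that is, the centralizer of a·b^t in F(α) equals the cyclic subgroup ⟨a·b^t⟩. -/
/-!
Commuting elements `x` and `g = a * b ^ t` generate an abelian subgroup of the free group, which
is free by Nielsen–Schreier and hence cyclic, say generated by `c`. Write `g = c ^ n`; the
homomorphism `φ` to `ℤ` counting the exponent of `a` has `φ g = 1`, so `n * φ c = 1`, `n = ±1`
and `⟨c⟩ = ⟨g⟩`.
-/

open Subgroup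

namespace FreeGroup

variable {X : Type*}

theorem of_mul_of_ne_of_mul_of {i j : X} (hij : i ≠ j) : of i * of j ≠ of j * of i := by
  classical
  intro h
  let f : X → Equiv.Perm (Fin 3) := fun y =>
    if y = i then Equiv.swap 0 1 else if y = j then Equiv.swap 1 2 else 1
  have hf := congrArg (lift f) h
  simp only [_root_.map_mul, lift_apply_of] at hf
  rw [show f i = Equiv.swap 0 1 from if_pos rfl,
    show f j = Equiv.swap 1 2 by simp [f, hij.symm]] at hf
  revert hf
  decide

theorem subsingleton_of_isMulCommutative [IsMulCommutative (FreeGroup X)] : Subsingleton X :=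
  ⟨fun _ _ ↦ by_contra fun hij ↦ of_mul_of_ne_of_mul_of hij (mul_comm' _ _)⟩

instance isCyclic_of_isMulCommutative [IsMulCommutative (FreeGroup X)] :
    IsCyclic (FreeGroup X) := by
  have := subsingleton_of_isMulCommutative (X := X)
  cases isEmpty_or_nonempty X
  · infer_instance
  · have : Unique X := uniqueOfSubsingleton (Classical.arbitrary X)
    infer_instance

end FreeGroup

namespace IsFreeGroup

variable {G : Type*} [Group G] [IsFreeGroup G]

theorem isCyclic_of_isMulCommutative [IsMulCommutative G] : IsCyclic G :=
  have : IsMulCommutative (FreeGroup (Generators G)) :=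
    Function.Surjective.mul_comm (f := (toFreeGroup G).toMulHom) (toFreeGroup G).surjective ‹_›
  isCyclic_of_surjective (toFreeGroup G).symm (toFreeGroup G).symm.surjective

theorem exists_mem_zpowers_of_commute {x y : G} (h : Commute x y) :
    ∃ c : G, x ∈ zpowers c ∧ y ∈ zpowers c := by
  let H := closure {x, y}
  have : IsMulCommutative H := isMulCommutative_closure (by
    rintro _ (rfl | rfl) _ (rfl | rfl) <;> first | rfl | exact h.eq | exact h.eq.symm)
  obtain ⟨c, hc⟩ := isCyclic_of_isMulCommutative (G := H)
  obtain ⟨m, hm⟩ := hc ⟨x, subset_closure (by simp)⟩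
  obtain ⟨n, hn⟩ := hc ⟨y, subset_closure (by simp)⟩
  exact ⟨c, ⟨m, congrArg Subtype.val hm⟩, ⟨n, congrArg Subtype.val hn⟩⟩

end IsFreeGroup

theorem Subgroup.mem_zpowers_of_mem_zpowers_of_map_eq_ofAdd_one {G : Type*} [Group G]
    (φ : G →* Multiplicative ℤ) {g c : G} (hg : φ g = .ofAdd 1) (hgc : g ∈ zpowers c) :
    c ∈ zpowers g := by
  obtain ⟨n, rfl⟩ := hgc
  have hn : n * (φ c).toAdd = 1 := by
    simpa [toAdd_zpow] using congrArg Multiplicative.toAdd hg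
  rcases Int.eq_one_or_neg_one_of_mul_eq_one hn with rfl | rfl
  · exact ⟨1, by simp⟩
  · exact ⟨-1, by simp⟩

theorem stmt_5_general (α : Type*) (a b : α) (hab : a ≠ b) (t : ℤ)
    (x : FreeGroup α) :
    x * (FreeGroup.of a * FreeGroup.of b ^ t) = (FreeGroup.of a * FreeGroup.of b ^ t) * x ↔
      x ∈ Subgroup.zpowers (FreeGroup.of a * FreeGroup.of b ^ t) := by
  classical
  set g := FreeGroup.of a * FreeGroup.of b ^ t
  refine ⟨fun h ↦ ?_, fun ⟨n, hn⟩ ↦ hn ▸ ((Commute.refl g).zpow_left n).eq⟩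
  obtain ⟨c, hxc, hgc⟩ := IsFreeGroup.exists_mem_zpowers_of_commute h
  have hg : FreeGroup.lift (Pi.mulSingle a (Multiplicative.ofAdd (1 : ℤ))) g = .ofAdd 1 := by
    simp [g, Pi.mulSingle_eq_of_ne hab.symm]
  exact zpowers_le.2 (mem_zpowers_of_mem_zpowers_of_map_eq_ofAdd_one _ hg hgc) hxc

/-- In a free group, for distinct generators `a ≠ b` and a nonzero integer `t`, the
centralizer of `a * b^t` is the cyclic subgroup `⟨a * b^t⟩`: an element commutes with
`a * b^t` iff it is an integer power of `a * b^t`. -/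
theorem stmt_5 (α : Type*) (a b : α) (hab : a ≠ b) (t : ℤ) (ht : t ≠ 0)
    (x : FreeGroup α) :
    x * (FreeGroup.of a * FreeGroup.of b ^ t) = (FreeGroup.of a * FreeGroup.of b ^ t) * x ↔
      x ∈ Subgroup.zpowers (FreeGroup.of a * FreeGroup.of b ^ t) :=
  stmt_5_general α a b hab t x
end

section
/- Let Γ be a simple graph on a finite vertex set V and let S ⊆ V be a weak module. Then V ∖ S = ⋃_{u ∈ V ∖ star(S)} star(u); that is, a vertex w lies outside S if and only if w belongs to star(u) for some vertex u not in star(S). -/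
/-! The stars of the vertices of a weak module `S` all coincide with `star S`. So a vertex `w`
lies in `star u` for some `u ∉ star S` exactly when `star w ⊄ star S`. For `w ∈ S` this fails;
for `w ∉ S` it holds, since otherwise minimality would force `star w = star S` and maximality
of `S` would put `w` into `S`. -/

/-- The star of a vertex: the vertex together with its neighbours. -/
def vertexStar {V : Type*} (Γ : SimpleGraph V) (v : V) : Set V :=
  insert v (Γ.neighborSet v)

/-- The star of a set of vertices: `S` together with the common neighbours of `S`. -/
def setStar {V : Type*} (Γ : SimpleGraph V) (S : Set V) : Set V :=
  S ∪ ⋂ v ∈ S, Γ.neighborSet v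

/-- A vertex is minimal if no vertex has a strictly smaller star. -/
def IsMinVertex {V : Type*} (Γ : SimpleGraph V) (v : V) : Prop :=
  ∀ u : V, vertexStar Γ u ⊆ vertexStar Γ v → vertexStar Γ u = vertexStar Γ v

/-- A weak set: a nonempty set of minimal vertices, all with the same star. -/
def IsWeakSet {V : Type*} (Γ : SimpleGraph V) (S : Set V) : Prop :=
  S.Nonempty ∧ (∀ v ∈ S, IsMinVertex Γ v) ∧
    ∀ u ∈ S, ∀ v ∈ S, vertexStar Γ u = vertexStar Γ v

/-- A weak module: a weak set which is maximal under inclusion among weak sets. -/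
def IsWeakModule {V : Type*} (Γ : SimpleGraph V) (S : Set V) : Prop :=
  IsWeakSet Γ S ∧ ∀ T : Set V, IsWeakSet Γ T → S ⊆ T → T = S

section

variable {V : Type*} {Γ : SimpleGraph V} {S : Set V} {u v w : V}

lemma mem_vertexStar_self (v : V) : v ∈ vertexStar Γ v :=
  Set.mem_insert v _

lemma mem_vertexStar_comm : w ∈ vertexStar Γ u ↔ u ∈ vertexStar Γ w := by
  simp only [vertexStar, Set.mem_insert_iff, SimpleGraph.mem_neighborSet]
  exact or_congr eq_comm (Γ.adj_comm _ _)

lemma setStar_eq_vertexStar (hS : ∀ u ∈ S, ∀ w ∈ S, vertexStar Γ u = vertexStar Γ w)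
    (hv : v ∈ S) : setStar Γ S = vertexStar Γ v := by
  ext x
  constructor
  · rintro (hx | hx)
    · exact hS x hx v hv ▸ mem_vertexStar_self x
    · exact Set.mem_insert_of_mem _ (Set.mem_iInter₂.mp hx v hv)
  · intro hx
    by_cases hxS : x ∈ S
    · exact Or.inl hxS
    refine Or.inr (Set.mem_iInter₂.mpr fun y hy => ?_)
    rcases (hS v hv y hy ▸ hx : x ∈ vertexStar Γ y) with rfl | hxy
    · exact absurd hy hxS
    · exact hxy

lemma IsWeakModule.mem_of_vertexStar_eq (hS : IsWeakModule Γ S) (hv : v ∈ S)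
    (hw : vertexStar Γ w = vertexStar Γ v) : w ∈ S := by
  obtain ⟨⟨_, hmin, hstar⟩, hmax⟩ := hS
  have hstar_insert : ∀ x ∈ insert w S, vertexStar Γ x = vertexStar Γ v := by
    rintro x (rfl | hx)
    exacts [hw, hstar x hx v hv]
  have hT : IsWeakSet Γ (insert w S) := by
    refine ⟨Set.insert_nonempty w S, fun x hx y hy => ?_, fun x hx y hy => ?_⟩
    · rw [hstar_insert x hx] at hy ⊢
      exact hmin v hv y hy
    · rw [hstar_insert x hx, hstar_insert y hy]
  exact hmax _ hT (Set.subset_insert w S) ▸ Set.mem_insert w S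

end

theorem stmt_10_general (V : Type*) (Γ : SimpleGraph V) (S : Set V)
    (hS : IsWeakModule Γ S) :
    Sᶜ = ⋃ u ∈ (setStar Γ S)ᶜ, vertexStar Γ u := by
  obtain ⟨v, hv⟩ := hS.1.1
  have hstar := hS.1.2.2
  rw [setStar_eq_vertexStar hstar hv]
  ext w
  simp only [Set.mem_compl_iff, Set.mem_iUnion, exists_prop]
  constructor
  · intro hwS
    by_contra! hcover
    have hsub : vertexStar Γ w ⊆ vertexStar Γ v := fun u hu =>
      not_not.mp fun hu' => hcover u hu' (mem_vertexStar_comm.mp hu)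
    exact hwS (hS.mem_of_vertexStar_eq hv (hS.1.2.1 v hv w hsub))
  · rintro ⟨u, hu, hwu⟩ hwS
    exact hu (hstar w hwS v hv ▸ mem_vertexStar_comm.mp hwu)

/-- For a weak module `S`, the complement of `S` is the union of the stars of the
vertices lying outside `star S`. -/
theorem stmt_10 (V : Type*) [Fintype V] (Γ : SimpleGraph V) (S : Set V)
    (hS : IsWeakModule Γ S) :
    Sᶜ = ⋃ u ∈ (setStar Γ S)ᶜ, vertexStar Γ u :=
  stmt_10_general V Γ S hS
end

section
/- Let G be a group, s ∈ G, and H a subgroup of the abelianization Ab(G) such that Ab(G) is the internal direct product of ⟨ab(s)⟩ and H and ab(s) has infinite order. Let g ∈ G satisfy ab(g) ∈ H. Then s·g is a primitive element of G: s·g has infinite order, and for all h ∈ G and all integers n, if s·g = h^n then n = 1 or n = -1. -/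
/-!
The composite `G → Ab(G) → Ab(G) ⧸ H` sends `s * g` to the image `x` of `ab s`. The two
direct-product conditions make `Ab(G) ⧸ H` infinite cyclic with generator `x`, and a generator
of an infinite cyclic group is not a proper power. Primitivity pulls back along homomorphisms.
-/

open Subgroup

def IsPrimitiveElement {G : Type*} [Group G] (t : G) : Prop :=
  ¬ IsOfFinOrder t ∧ ∀ (h : G) (n : ℤ), t = h ^ n → n = 1 ∨ n = -1

theorem IsPrimitiveElement.of_map {G K : Type*} [Group G] [Group K] (φ : G →* K) {t : G}
    (ht : IsPrimitiveElement (φ t)) : IsPrimitiveElement t :=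
  ⟨fun hfin => ht.1 (φ.isOfFinOrder hfin),
    fun h n hn => ht.2 (φ h) n (by rw [hn, map_zpow])⟩

theorem isPrimitiveElement_of_zpowers_eq_top {K : Type*} [Group K] {x : K}
    (hx : ¬ IsOfFinOrder x) (htop : zpowers x = ⊤) : IsPrimitiveElement x := by
  refine ⟨hx, fun h n hn => ?_⟩
  obtain ⟨m, rfl⟩ := mem_zpowers_iff.mp (htop ▸ mem_top h : h ∈ zpowers x)
  have hnm : n * m = 1 := by
    apply injective_zpow_iff_not_isOfFinOrder.mpr hx
    simp only [mul_comm n, zpow_mul, ← hn, zpow_one]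
  exact Int.eq_one_or_neg_one_of_mul_eq_one hnm

section Quotient

variable {A : Type*} [Group A] {a : A} {H : Subgroup A} [H.Normal]

theorem not_isOfFinOrder_mk_of_zpowers_inf_eq_bot (hinf : zpowers a ⊓ H = ⊥)
    (ha : ¬ IsOfFinOrder a) : ¬ IsOfFinOrder (a : A ⧸ H) := by
  rintro ⟨n, hn, hpow⟩
  have hmem : a ^ n ∈ zpowers a ⊓ H :=
    ⟨npow_mem_zpowers a n, (QuotientGroup.eq_one_iff _).mp (by simpa using hpow.eq)⟩
  rw [hinf, mem_bot] at hmem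
  exact ha (isOfFinOrder_iff_pow_eq_one.mpr ⟨n, hn, hmem⟩)

theorem zpowers_mk_eq_top_of_zpowers_sup_eq_top (hsup : zpowers a ⊔ H = ⊤) :
    zpowers (a : A ⧸ H) = ⊤ := by
  have hmap := congrArg (map (QuotientGroup.mk' H)) hsup
  rwa [Subgroup.map_sup, QuotientGroup.map_mk'_self, sup_bot_eq, MonoidHom.map_zpowers,
    map_top_of_surjective _ (QuotientGroup.mk'_surjective H)] at hmap

end Quotient

/-- If `s` is abelian-primitive with complement `H` and `ab g ∈ H`, then `s * g` is a
primitive element: it has infinite order and is not a proper power. -/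
theorem stmt_16 (G : Type*) [Group G] (s : G) (H : Subgroup (Abelianization G))
    (hinf : Subgroup.zpowers (Abelianization.of s) ⊓ H = ⊥)
    (hsup : Subgroup.zpowers (Abelianization.of s) ⊔ H = ⊤)
    (hord : ¬ IsOfFinOrder (Abelianization.of s))
    (g : G) (hg : Abelianization.of g ∈ H) :
    ¬ IsOfFinOrder (s * g) ∧
      ∀ (h : G) (n : ℤ), s * g = h ^ n → n = 1 ∨ n = -1 := by
  let φ : G →* Abelianization G ⧸ H := (QuotientGroup.mk' H).comp Abelianization.of
  have hφg : φ g = 1 := (QuotientGroup.eq_one_iff _).mpr hg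
  have hφsg : φ (s * g) = φ s := by rw [map_mul, hφg, mul_one]
  have hx : IsPrimitiveElement (φ s) := isPrimitiveElement_of_zpowers_eq_top
    (not_isOfFinOrder_mk_of_zpowers_inf_eq_bot hinf hord)
    (zpowers_mk_eq_top_of_zpowers_sup_eq_top hsup)
  exact IsPrimitiveElement.of_map φ (hφsg ▸ hx)
end
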